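/- Let A = Q[x]/(x^{n+1}) with |x| = 2 and zero differential, and let L be the graded Lie algebra (L∞-algebra) with basis α in degree 1 and β in degree 2m (m ≥ n ≥ 1), whose only nonvanishing bracket is the (m+1)-ary one determined by (1/(m+1)!)[α^{∧(m+1)}] = β. Then τ = x ⊗ α is a Maurer-Cartan element of A ⊗ L, and in the twisted L∞-algebra (A ⊗ L)^τ the brackets satisfy (1/r!)[(1 ⊗ α)^{∧r}]_τ = binom(m+1, r) x^{m+1-r} ⊗ β, which is zero whenever r ≤ m - n; in particular the twisted differential [1 ⊗ α]_τ is zero if m > n and equals (n+1) x^n ⊗ β if m = n. -/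

import Mathlib

open scoped BigOperators Classical

noncomputable section

/-- A "pre-L∞-algebra": a ℤ-graded ℚ-vector space (given by an internal family of graded
pieces) with graded-antisymmetric multilinear brackets `ℓ_r` of (homological) degree `r - 2`. -/
structure PreLInfty (M : Type*) [AddCommGroup M] [Module ℚ M] where
  grade : ℤ → Submodule ℚ M
  bracket : (r : ℕ) → MultilinearMap ℚ (fun _ : Fin r => M) M
  bracket_grade : ∀ (r : ℕ) (d : Fin r → ℤ) (x : Fin r → M),
    (∀ i, x i ∈ grade (d i)) → bracket r x ∈ grade ((∑ i, d i) + ((r : ℤ) - 2))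
  antisymm : ∀ (r : ℕ) (d : Fin r → ℤ) (x : Fin r → M) (i : ℕ) (h : i + 1 < r),
    (∀ k, x k ∈ grade (d k)) →
    bracket r (x ∘ Equiv.swap ⟨i, by omega⟩ ⟨i + 1, h⟩) =
      (-((-1 : ℚ) ^ (d ⟨i, by omega⟩ * d ⟨i + 1, h⟩))) • bracket r x

/-- The generalized Jacobi identity in arity `n`:
`∑_{p=1}^{n} ∑_{σ (p,n-p)-unshuffle} (-1)^ε [[x_{σ1},…,x_{σp}], x_{σ(p+1)},…,x_{σn}] = 0`
with `ε = p + ∑_{i<j, σi>σj} (|x_i||x_j| + 1)`, for homogeneous `x_i`. -/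
def PreLInfty.GenJacobi {M : Type*} [AddCommGroup M] [Module ℚ M]
    (L : PreLInfty M) (n : ℕ) : Prop :=
  ∀ (d : Fin n → ℤ) (x : Fin n → M), (∀ i, x i ∈ L.grade (d i)) →
    ∑ p : Fin n, ∑ σ ∈ Finset.univ.filter (fun σ : Equiv.Perm (Fin n) =>
        (∀ i j : Fin n, (i : ℕ) < (p : ℕ) + 1 → (j : ℕ) < (p : ℕ) + 1 → i < j → σ i < σ j) ∧
        (∀ i j : Fin n, (p : ℕ) + 1 ≤ (i : ℕ) → i < j → σ i < σ j)),
      ((-1 : ℚ) ^ ((((p : ℕ) + 1 : ℕ) : ℤ) + ∑ q ∈ Finset.univ.filter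
          (fun q : Fin n × Fin n => q.1 < q.2 ∧ σ q.2 < σ q.1),
          (d q.1 * d q.2 + 1))) •
        L.bracket (n - ((p : ℕ) + 1) + 1)
          (Fin.cons
            (L.bracket ((p : ℕ) + 1)
              (fun i : Fin ((p : ℕ) + 1) => x (σ (Fin.castLE p.isLt i))))
            (fun i : Fin (n - ((p : ℕ) + 1)) =>
              x (σ (Fin.cast (Nat.sub_add_cancel p.isLt) (Fin.addNat i ((p : ℕ) + 1)))))) = 0

/-- An L∞-algebra: a pre-L∞-algebra whose brackets satisfy all generalized Jacobi identities. -/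
structure LInftyAlg (M : Type*) [AddCommGroup M] [Module ℚ M] extends PreLInfty M where
  jacobi : ∀ n : ℕ, 0 < n → toPreLInfty.GenJacobi n

/-- The differential `δ = ℓ₁` of an L∞-algebra, as a linear map. -/
def LInftyAlg.δ {M : Type*} [AddCommGroup M] [Module ℚ M] (L : LInftyAlg M) : M →ₗ[ℚ] M :=
  (MultilinearMap.ofSubsingleton ℚ M M (0 : Fin 1)).symm (L.bracket 1)

/-!
On the classes `xⁱ ⊗ α` the only nonzero bracket of `A ⊗ L` is the `(m+1)`-ary one, sending
`x^{i₁} ⊗ α, …, x^{i_{m+1}} ⊗ α` to `(m+1)! x^{i₁+⋯+i_{m+1}} ⊗ β`. Applied to `τ^{m+1}` it lands in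
`x^{m+1} = 0`, so `τ` is Maurer–Cartan; in the twisting series for `[(1 ⊗ α)^{∧r}]_τ` only the term
with `m + 1 - r` copies of `τ` survives, and it contributes
`(m+1)! / (r! (m+1-r)!) · x^{m+1-r} ⊗ β`.
-/

namespace PreLInfty

variable {N : Type*} [AddCommGroup N] [Module ℚ N] (T : PreLInfty N)

/-- The brackets of `A ⊗ L` on the classes `xa i = xⁱ ⊗ α`, with `xb i = xⁱ ⊗ β`. -/
def HasOnlyTopBracket (m : ℕ) (xa xb : ℕ → N) : Prop :=
  ∀ ⦃s : ℕ⦄ (f : Fin s → ℕ), 1 ≤ s →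
    T.bracket s (fun j => xa (f j)) =
      if s = m + 1 then (((m + 1).factorial : ℚ)) • xb (∑ j, f j) else 0

variable {T} {m : ℕ} {xa xb : ℕ → N}

theorem hasOnlyTopBracket_of
    (hbr_top : ∀ i : Fin (m + 1) → ℕ,
      T.bracket (m + 1) (fun j => xa (i j)) = (((m + 1).factorial : ℚ)) • xb (∑ j, i j))
    (hbr_other : ∀ r : ℕ, 1 ≤ r → r ≠ m + 1 → ∀ i : Fin r → ℕ,
      T.bracket r (fun j => xa (i j)) = 0) :
    T.HasOnlyTopBracket m xa xb := by
  intro s f hs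
  split_ifs with h
  · subst h
    exact hbr_top f
  · exact hbr_other s hs h f

namespace HasOnlyTopBracket

theorem bracket_const (h : T.HasOnlyTopBracket m xa xb) {k : ℕ} (hk : 1 ≤ k) (i : ℕ) :
    T.bracket k (fun _ => xa i) =
      if k = m + 1 then (((m + 1).factorial : ℚ)) • xb (k * i) else 0 := by
  simpa using h (fun _ => i) hk

theorem bracket_ite_lt (h : T.HasOnlyTopBracket m xa xb) {s k : ℕ} (hs : 1 ≤ s) (hk : k ≤ s) :
    T.bracket s (fun i : Fin s => if (i : ℕ) < k then xa 1 else xa 0) =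
      if s = m + 1 then (((m + 1).factorial : ℚ)) • xb k else 0 := by
  have hsum : ∑ j : Fin s, (if (j : ℕ) < k then 1 else 0) = k := by
    simp [Finset.sum_boole, Fin.card_filter_val_lt, hk]
  simpa [apply_ite xa, hsum] using h (fun j : Fin s => if (j : ℕ) < k then 1 else 0) hs

theorem twisted_bracket (h : T.HasOnlyTopBracket m xa xb) {r K : ℕ} (hr : 1 ≤ r)
    (hK : m + 1 ≤ K + r) :
    ((r.factorial : ℚ))⁻¹ • ∑ k ∈ Finset.range (K + 1),
        ((k.factorial : ℚ))⁻¹ •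
          T.bracket (k + r) (fun i : Fin (k + r) => if (i : ℕ) < k then xa 1 else xa 0) =
      (((m + 1).choose r : ℚ)) • xb (m + 1 - r) := by
  rw [Finset.sum_eq_single (m + 1 - r), h.bracket_ite_lt (by omega) (by omega)]
  · by_cases hrm : r ≤ m + 1
    · rw [if_pos (by omega), smul_smul, smul_smul, Nat.cast_choose ℚ hrm]
      congr 1
      field_simp
    · rw [if_neg (by omega), Nat.choose_eq_zero_of_lt (by omega)]
      simp
  · intro k _ hk
    rw [h.bracket_ite_lt (by omega) (by omega), if_neg (by omega), smul_zero]
  · intro hk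
    simp only [Finset.mem_range, not_lt] at hk
    omega

end HasOnlyTopBracket

end PreLInfty

theorem cpn_cpm_mapping_space_model_general
    {N : Type*} [AddCommGroup N] [Module ℚ N] (T : LInftyAlg N)
    (m n : ℕ) (hnm : n ≤ m)
    (xa xb : ℕ → N)
    (hvan_b : ∀ i : ℕ, n < i → xb i = 0)
    -- the only nonvanishing bracket of `A ⊗ L`:
    (hbr_top : ∀ i : Fin (m + 1) → ℕ,
      T.bracket (m + 1) (fun j => xa (i j)) = (((m + 1).factorial : ℚ)) • xb (∑ j, i j))
    (hbr_other : ∀ r : ℕ, 1 ≤ r → r ≠ m + 1 → ∀ i : Fin r → ℕ,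
      T.bracket r (fun j => xa (i j)) = 0) :
    -- (1) `τ = x ⊗ α` is a Maurer-Cartan element: every term of the MC series vanishes
    (∀ k : ℕ, 1 ≤ k → T.bracket k (fun _ => xa 1) = 0) ∧
    -- (2) the twisted brackets `(1/r!)[(1⊗α)^{∧r}]_τ = C(m+1,r)·x^{m+1-r}⊗β`
    (∀ r : ℕ, 1 ≤ r → ∀ K : ℕ, m + 1 ≤ K + r →
      ((r.factorial : ℚ))⁻¹ • ∑ k ∈ Finset.range (K + 1),
          ((k.factorial : ℚ))⁻¹ •
            T.bracket (k + r) (fun i : Fin (k + r) => if (i : ℕ) < k then xa 1 else xa 0) =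
        (((m + 1).choose r : ℚ)) • xb (m + 1 - r)) ∧
    -- which is zero whenever `r ≤ m - n`
    (∀ r : ℕ, r ≤ m - n → (((m + 1).choose r : ℚ)) • xb (m + 1 - r) = 0) ∧
    -- the twisted differential is zero if `m > n` …
    (n < m → (((m + 1).choose 1 : ℚ)) • xb (m + 1 - 1) = 0) ∧
    -- … and equals `(n+1)·xⁿ⊗β` if `m = n`
    (m = n → (((m + 1).choose 1 : ℚ)) • xb (m + 1 - 1) = ((n : ℚ) + 1) • xb n) := by
  have h := PreLInfty.hasOnlyTopBracket_of hbr_top hbr_other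
  refine ⟨fun k hk => ?_, fun r hr K hK => h.twisted_bracket hr hK, fun r hr => ?_,
    fun hlt => ?_, fun heq => ?_⟩
  · rw [h.bracket_const hk]
    split_ifs with hkm
    · rw [hvan_b _ (by subst hkm; omega), smul_zero]
    · rfl
  · rw [hvan_b _ (by omega), smul_zero]
  · rw [hvan_b _ (by omega), smul_zero]
  · subst heq
    simp

/-- Let `A = ℚ[x]/(x^{n+1})` (`|x| = 2`, zero differential) and let `L` be
the minimal L∞-model of `ℂPᵐ` (`m ≥ n ≥ 1`) with basis `α` (degree 1), `β` (degree `2m`)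
and only nonvanishing bracket `(1/(m+1)!)[α^{∧(m+1)}] = β`.  We present the tensor
L∞-algebra `A ⊗ L` through its basis `xa i = xᶦ ⊗ α`, `xb i = xᶦ ⊗ β` (`xa i = xb i = 0`
for `i > n`), with the tensor brackets as hypotheses.  Then `τ = x ⊗ α = xa 1` is a
Maurer-Cartan element, the twisted brackets satisfy
`(1/r!)[(1⊗α)^{∧r}]_τ = C(m+1,r) x^{m+1-r} ⊗ β`, which vanishes whenever `r ≤ m - n`;
in particular the twisted differential `[1⊗α]_τ` is zero if `m > n` and equals
`(n+1) xⁿ ⊗ β` if `m = n`. -/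
theorem cpn_cpm_mapping_space_model
    {N : Type*} [AddCommGroup N] [Module ℚ N] (T : LInftyAlg N)
    (m n : ℕ) (hn : 1 ≤ n) (hnm : n ≤ m)
    (xa xb : ℕ → N)
    (hgrade_a : ∀ i : ℕ, xa i ∈ T.grade (1 - 2 * (i : ℤ)))
    (hgrade_b : ∀ i : ℕ, xb i ∈ T.grade (2 * (m : ℤ) - 2 * (i : ℤ)))
    (hvan_a : ∀ i : ℕ, n < i → xa i = 0)
    (hvan_b : ∀ i : ℕ, n < i → xb i = 0)
    -- the only nonvanishing bracket of `A ⊗ L`: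
    (hbr_top : ∀ i : Fin (m + 1) → ℕ,
      T.bracket (m + 1) (fun j => xa (i j)) = (((m + 1).factorial : ℚ)) • xb (∑ j, i j))
    (hbr_other : ∀ r : ℕ, 1 ≤ r → r ≠ m + 1 → ∀ i : Fin r → ℕ,
      T.bracket r (fun j => xa (i j)) = 0)
    -- `β` is central:
    (hcentral : ∀ (r : ℕ) (x : Fin r → N), 2 ≤ r → (∃ j k, x j = xb k) →
      T.bracket r x = 0)
    (hδb : ∀ k, T.bracket 1 (fun _ => xb k) = 0) :
    -- (1) `τ = x ⊗ α` is a Maurer-Cartan element: every term of the MC series vanishes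
    (∀ k : ℕ, 1 ≤ k → T.bracket k (fun _ => xa 1) = 0) ∧
    -- (2) the twisted brackets `(1/r!)[(1⊗α)^{∧r}]_τ = C(m+1,r)·x^{m+1-r}⊗β`
    (∀ r : ℕ, 1 ≤ r → ∀ K : ℕ, m + 1 ≤ K + r →
      ((r.factorial : ℚ))⁻¹ • ∑ k ∈ Finset.range (K + 1),
          ((k.factorial : ℚ))⁻¹ •
            T.bracket (k + r) (fun i : Fin (k + r) => if (i : ℕ) < k then xa 1 else xa 0) =
        (((m + 1).choose r : ℚ)) • xb (m + 1 - r)) ∧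
    -- which is zero whenever `r ≤ m - n`
    (∀ r : ℕ, r ≤ m - n → (((m + 1).choose r : ℚ)) • xb (m + 1 - r) = 0) ∧
    -- the twisted differential is zero if `m > n` …
    (n < m → (((m + 1).choose 1 : ℚ)) • xb (m + 1 - 1) = 0) ∧
    -- … and equals `(n+1)·xⁿ⊗β` if `m = n`
    (m = n → (((m + 1).choose 1 : ℚ)) • xb (m + 1 - 1) = ((n : ℚ) + 1) • xb n) :=
  cpn_cpm_mapping_space_model_general T m n hnm xa xb hvan_b hbr_top hbr_other

end
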